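/- Let $T$ be a string of length $n$ and $\tau \in [1..\lfloor n/2 \rfloor]$. Define a $\tau$-run of $T$ as a fragment $T[p..q]$ of length at least $\tau$ with $\mathrm{per}(T[p..q]) \le \tau/3$ that cannot be extended in either direction while preserving its shortest period. Then any two distinct $\tau$-runs overlap in at most $\frac{2}{3}\tau$ positions, and consequently the number of $\tau$-runs of $T$ is at most $3n/\tau$. -/
import Mathlib


/-- Length of the longest common prefix of two lists. -/
def lcpLen {α : Type*} [DecidableEq α] : List α → List α → ℕ
  | a :: s, b :: t => if a = b then lcpLen s t + 1 else 0
  | _, _ => 0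

/-- The fragment `T[a..a+len)` of a (1-indexed) text `T : ℕ → α`. -/
def frag {α : Type*} (T : ℕ → α) (a len : ℕ) : List α :=
  (List.range len).map (fun t => T (a + t))

/-- The suffix `T[j..n]` of a text of length `n`. -/
def suff {α : Type*} (T : ℕ → α) (n j : ℕ) : List α := frag T j (n + 1 - j)

/-- The fragment `T^∞[j..j+ℓ)` of the infinite periodic extension of `T[1..n]`. -/
def tinf {α : Type*} (T : ℕ → α) (n j ℓ : ℕ) : List α :=
  (List.range ℓ).map (fun t => T ((j + t - 1) % n + 1))

/-- `p` is a period of the list `X`. -/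
def hasPer {α : Type*} (X : List α) (p : ℕ) : Prop :=
  ∀ i, i + p < X.length → X[i]? = X[i + p]?

/-- The shortest period of a list. -/
noncomputable def per {α : Type*} (X : List α) : ℕ := sInf {p | 1 ≤ p ∧ hasPer X p}

/-- `runEnd S n i p` is the maximal `e ≤ n+1` such that `S[i..e)` has period `p`,
i.e. `S[i..runEnd S n i p)` is the longest prefix of `S[i..n]` with period `p`. -/
noncomputable def runEnd {α : Type*} (S : ℕ → α) (n i p : ℕ) : ℕ :=
  sSup {e | i ≤ e ∧ e ≤ n + 1 ∧ ∀ t, i ≤ t → t + p < e → S t = S (t + p)}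

/-- `T[p..q]` is a `τ`-run of `T[1..n]`: a fragment of length at least `τ` whose shortest
period is at most `τ/3`, maximal in the sense that extending it by one character on
either side (when possible) strictly increases the shortest period. -/
def IsTauRun {α : Type*} [LinearOrder α] (T : ℕ → α) (n τ p q : ℕ) : Prop :=
  1 ≤ p ∧ p ≤ q ∧ q ≤ n ∧ τ ≤ q + 1 - p ∧ 3 * per (frag T p (q + 1 - p)) ≤ τ ∧
    (1 < p → per (frag T p (q + 1 - p)) < per (frag T (p - 1) (q + 2 - p))) ∧
    (q < n → per (frag T p (q + 1 - p)) < per (frag T p (q + 2 - p)))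

/-! ### Auxiliary machinery -/

/-- `p` is a period of `T` on the (1-indexed) interval `[a, b]`. -/
def PerOn {α : Type*} (T : ℕ → α) (a b p : ℕ) : Prop :=
  ∀ i, a ≤ i → i + p ≤ b → T i = T (i + p)

lemma PerOn.mono {α : Type*} {T : ℕ → α} {a b c d p : ℕ} (h : PerOn T a b p)
    (hac : a ≤ c) (hdb : d ≤ b) : PerOn T c d p :=
  fun i hi hib => h i (hac.trans hi) (hib.trans hdb)

/-- Propagation: if `T` has period `p` on `[a,b]` and period `g` on a sub-window `[c,d]`
of length at least `p + g`, then `T` has period `g` on all of `[a,b]`. -/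
lemma PerOn.propagate {α : Type*} {T : ℕ → α} {a b c d p g : ℕ}
    (hp : PerOn T a b p) (hg : PerOn T c d g) (hac : a ≤ c) (hdb : d ≤ b)
    (h1p : 1 ≤ p) (hpg : p + g ≤ d + 1 - c) : PerOn T a b g := by
  have hcd : c + p + g ≤ d + 1 := by omega
  have R : ∀ i, c ≤ i → i + g ≤ b → T i = T (i + g) := by
    intro i
    induction i using Nat.strong_induction_on with
    | _ i ih =>
      intro hci hib
      by_cases hcase : i + g ≤ d
      · exact hg i hci hcase
      · have hip : c + p ≤ i := by omega
        have e1 := hp (i - p) (by omega) (by omega)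
        have e2 := hp (i - p + g) (by omega) (by omega)
        have e3 := ih (i - p) (by omega) (by omega) (by omega)
        have h1 : i - p + p = i := by omega
        have h2 : i - p + g + p = i + g := by omega
        rw [h1] at e1; rw [h2] at e2
        rw [← e1, e3, e2]
  have L : ∀ k i, c - i ≤ k → a ≤ i → i + g ≤ b → T i = T (i + g) := by
    intro k
    induction k with
    | zero => intro i h0 hai hib; exact R i (by omega) hib
    | succ k ih =>
      intro i hk hai hib
      by_cases hci : c ≤ i
      · exact R i hci hib
      · have e1 := hp i hai (by omega)
        have e2 := hp (i + g) (by omega) (by omega)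
        have e3 := ih (i + p) (by omega) (by omega) (by omega)
        have h2 : i + g + p = i + p + g := by omega
        rw [h2] at e2
        rw [e1, e3, ← e2]
  exact fun i hai hib => L c i (by omega) hai hib

/-- Weak Fine–Wilf periodicity lemma on an interval. -/
lemma fineWilf {α : Type*} (T : ℕ → α) :
    ∀ N p q a b, 1 ≤ p → 1 ≤ q → p + q ≤ N → p + q + a ≤ b + 1 →
      PerOn T a b p → PerOn T a b q → PerOn T a b (Nat.gcd p q) := by
  intro N
  induction N with
  | zero => intro p q a b hp hq hN; exact absurd hN (by omega)
  | succ N ih =>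
    intro p q a b hp hq hN hab hPp hPq
    have key : ∀ p q, 1 ≤ p → 1 ≤ q → p < q → p + q ≤ N + 1 → p + q + a ≤ b + 1 →
        PerOn T a b p → PerOn T a b q → PerOn T a b (Nat.gcd p q) := by
      intro p q hp hq hlt hN hab hPp hPq
      have hsubq : PerOn T a (b - p) (q - p) := by
        intro i hi hib
        have e1 := hPq i hi (by omega)
        have e2 := hPp (i + (q - p)) (by omega) (by omega)
        have h2 : i + (q - p) + p = i + q := by omega
        rw [h2] at e2
        rw [e1, ← e2]
      have hsubp : PerOn T a (b - p) p := hPp.mono le_rfl (by omega)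
      have hgcd := ih p (q - p) a (b - p) hp (by omega) (by omega) (by omega) hsubp hsubq
      have hgg : Nat.gcd p (q - p) = Nat.gcd p q := by
        apply Nat.dvd_antisymm
        · refine Nat.dvd_gcd (Nat.gcd_dvd_left _ _) ?_
          have h1 := Nat.gcd_dvd_left p (q - p)
          have h2 := Nat.gcd_dvd_right p (q - p)
          have h3 := Nat.dvd_add h2 h1
          rwa [Nat.sub_add_cancel hlt.le] at h3
        · exact Nat.dvd_gcd (Nat.gcd_dvd_left _ _)
            (Nat.dvd_sub (Nat.gcd_dvd_right _ _) (Nat.gcd_dvd_left _ _))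
      have hgpos : 0 < Nat.gcd p (q - p) := Nat.gcd_pos_of_pos_left _ hp
      have hgle : Nat.gcd p (q - p) ≤ q - p :=
        Nat.le_of_dvd (by omega) (Nat.gcd_dvd_right _ _)
      rw [← hgg]
      exact hPp.propagate hgcd le_rfl (by omega) hp (by omega)
    rcases Nat.lt_trichotomy p q with h | h | h
    · exact key p q hp hq h hN hab hPp hPq
    · subst h; rw [Nat.gcd_self]; exact hPp
    · rw [Nat.gcd_comm]; exact key q p hq hp h (by omega) (by omega) hPq hPp

lemma length_frag {α : Type*} (T : ℕ → α) (a len : ℕ) : (frag T a len).length = len := by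
  simp [frag]

lemma frag_getElem? {α : Type*} (T : ℕ → α) (a len j : ℕ) (h : j < len) :
    (frag T a len)[j]? = some (T (a + j)) := by
  simp [frag, List.getElem?_map, List.getElem?_range, h]

lemma hasPer_frag_iff {α : Type*} (T : ℕ → α) (a b p : ℕ) (hab : a ≤ b + 1) :
    hasPer (frag T a (b + 1 - a)) p ↔ PerOn T a b p := by
  unfold hasPer
  simp only [length_frag]
  constructor
  · intro h i hi hib
    have hh := h (i - a) (by omega)
    rw [frag_getElem? _ _ _ _ (by omega), frag_getElem? _ _ _ _ (by omega)] at hh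
    have e1 : a + (i - a) = i := by omega
    have e2 : a + (i - a + p) = i + p := by omega
    rw [e1, e2] at hh
    exact Option.some.inj hh
  · intro h j hj
    rw [frag_getElem? _ _ _ _ (by omega), frag_getElem? _ _ _ _ hj]
    have hh := h (a + j) (by omega) (by omega)
    have e : a + (j + p) = a + j + p := by omega
    rw [e, hh]

lemma per_mem {α : Type*} (X : List α) (h : 1 ≤ X.length) :
    1 ≤ per X ∧ hasPer X (per X) := by
  have h2 : per X ∈ {p | 1 ≤ p ∧ hasPer X p} :=
    Nat.sInf_mem ⟨X.length, h, fun i hi => absurd hi (by omega)⟩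
  exact h2

lemma per_le {α : Type*} (X : List α) {p : ℕ} (h1 : 1 ≤ p) (h2 : hasPer X p) :
    per X ≤ p := Nat.sInf_le ⟨h1, h2⟩

/-- Core overlap bound, assuming `p ≤ p'`. -/
lemma overlap_bound {α : Type*} [LinearOrder α] {T : ℕ → α} {n τ p q p' q' : ℕ}
    (hτ : 1 ≤ τ) (h1 : IsTauRun T n τ p q) (h2 : IsTauRun T n τ p' q')
    (hpp : p ≤ p') (hne : (p, q) ≠ (p', q')) :
    3 * (min q q' + 1 - p') ≤ 2 * τ := by
  by_contra hbig
  push_neg at hbig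
  obtain ⟨hp1, hpq, hqn, hlen, hper3, hmaxL, hmaxR⟩ := h1
  obtain ⟨hp1', hpq', hqn', hlen', hper3', hmaxL', hmaxR'⟩ := h2
  have hm1 := per_mem (frag T p (q + 1 - p)) (by rw [length_frag]; omega)
  have hm2 := per_mem (frag T p' (q' + 1 - p')) (by rw [length_frag]; omega)
  have hπ1pos : 1 ≤ per (frag T p (q + 1 - p)) := hm1.1
  have hπ2pos : 1 ≤ per (frag T p' (q' + 1 - p')) := hm2.1
  have hP1 : PerOn T p q (per (frag T p (q + 1 - p))) :=
    (hasPer_frag_iff T p q _ (by omega)).1 hm1.2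
  have hP2 : PerOn T p' q' (per (frag T p' (q' + 1 - p'))) :=
    (hasPer_frag_iff T p' q' _ (by omega)).1 hm2.2
  have hQmq : min q q' ≤ q := min_le_left _ _
  have hQmq' : min q q' ≤ q' := min_le_right _ _
  have hO1 : PerOn T p' (min q q') (per (frag T p (q + 1 - p))) := hP1.mono hpp hQmq
  have hO2 : PerOn T p' (min q q') (per (frag T p' (q' + 1 - p'))) := hP2.mono le_rfl hQmq'
  have hgper := fineWilf T (per (frag T p (q + 1 - p)) + per (frag T p' (q' + 1 - p')))
    (per (frag T p (q + 1 - p))) (per (frag T p' (q' + 1 - p'))) p' (min q q')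
    hπ1pos hπ2pos le_rfl (by omega) hO1 hO2
  set g := Nat.gcd (per (frag T p (q + 1 - p))) (per (frag T p' (q' + 1 - p'))) with hgdef
  have hgpos : 1 ≤ g := Nat.gcd_pos_of_pos_left _ hπ1pos
  have hgπ1 : g ≤ per (frag T p (q + 1 - p)) :=
    Nat.le_of_dvd (by omega) (Nat.gcd_dvd_left _ _)
  have hgπ2 : g ≤ per (frag T p' (q' + 1 - p')) :=
    Nat.le_of_dvd (by omega) (Nat.gcd_dvd_right _ _)
  have hR1g : PerOn T p q g := hP1.propagate hgper hpp hQmq hπ1pos (by omega)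
  have hR2g : PerOn T p' q' g := hP2.propagate hgper le_rfl hQmq' hπ2pos (by omega)
  have he1 : per (frag T p (q + 1 - p)) = g :=
    le_antisymm (per_le _ hgpos ((hasPer_frag_iff T p q _ (by omega)).2 hR1g)) hgπ1
  have he2 : per (frag T p' (q' + 1 - p')) = g :=
    le_antisymm (per_le _ hgpos ((hasPer_frag_iff T p' q' _ (by omega)).2 hR2g)) hgπ2
  -- the union `[p, max q q']` has period `g`
  have hqQ : q ≤ max q q' := le_max_left _ _
  have hq'Q : q' ≤ max q q' := le_max_right _ _
  have hQch : max q q' = q ∨ max q q' = q' := max_choice _ _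
  have hU : PerOn T p (max q q') g := by
    intro i hi hib
    by_cases hc : i + g ≤ q
    · exact hR1g i hi hc
    · have hQx : max q q' = q' := by omega
      have hip' : p' ≤ i := by omega
      exact hR2g i hip' (by omega)
  rcases eq_or_lt_of_le hpp with heq | hlt
  · have hqq : q ≠ q' := by
      intro h; exact hne (by rw [heq, h])
    rcases Nat.lt_or_ge q q' with hlt2 | hge
    · -- extend run 1 to the right
      have hext : PerOn T p (q + 1) g := hU.mono le_rfl (by omega)
      have hle : per (frag T p (q + 2 - p)) ≤ g := by
        have e : q + 2 - p = (q + 1) + 1 - p := by omega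
        rw [e]
        exact per_le _ hgpos ((hasPer_frag_iff T p (q + 1) _ (by omega)).2 hext)
      have := hmaxR (by omega)
      omega
    · -- q' < q : extend run 2 to the right
      have hlt2 : q' < q := by omega
      have hext : PerOn T p' (q' + 1) g := hU.mono (by omega) (by omega)
      have hle : per (frag T p' (q' + 2 - p')) ≤ g := by
        have e : q' + 2 - p' = (q' + 1) + 1 - p' := by omega
        rw [e]
        exact per_le _ hgpos ((hasPer_frag_iff T p' (q' + 1) _ (by omega)).2 hext)
      have := hmaxR' (by omega)
      omega
  · -- p < p' : extend run 2 to the left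
    have hext : PerOn T (p' - 1) q' g := hU.mono (by omega) hq'Q
    have hle : per (frag T (p' - 1) (q' + 2 - p')) ≤ g := by
      have e : q' + 2 - p' = q' + 1 - (p' - 1) := by omega
      rw [e]
      exact per_le _ hgpos ((hasPer_frag_iff T (p' - 1) q' _ (by omega)).2 hext)
    have := hmaxL' (by omega)
    omega

/-- Distinct runs have well-separated starting positions. -/
lemma run_gap {α : Type*} [LinearOrder α] {T : ℕ → α} {n τ p q p' q' : ℕ}
    (hτ : 1 ≤ τ) (h1 : IsTauRun T n τ p q) (h2 : IsTauRun T n τ p' q')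
    (hpp : p ≤ p') (hne : (p, q) ≠ (p', q')) : τ ≤ 3 * (p' - p) := by
  have hb := overlap_bound hτ h1 h2 hpp hne
  obtain ⟨hp1, hpq, hqn, hlen, -⟩ := h1
  obtain ⟨hp1', hpq', hqn', hlen', -⟩ := h2
  have hmin : p + τ - 1 ≤ min q q' := le_min (by omega) (by omega)
  omega

/-- Any two distinct `τ`-runs of `T` overlap in at most `(2/3)τ` positions, and
consequently the number of `τ`-runs of `T` is at most `3n/τ`. -/
theorem tauRuns_overlap_and_count {α : Type*} [LinearOrder α] (T : ℕ → α) (n τ : ℕ)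
    (hτ : 1 ≤ τ) (hτn : 2 * τ ≤ n) :
    (∀ p q p' q', IsTauRun T n τ p q → IsTauRun T n τ p' q' → (p, q) ≠ (p', q') →
        3 * ((Finset.Icc p q) ∩ (Finset.Icc p' q')).card ≤ 2 * τ) ∧
      τ * {x : ℕ × ℕ | IsTauRun T n τ x.1 x.2}.ncard ≤ 3 * n := by
  constructor
  · intro p q p' q' h1 h2 hne
    have hIcc : Finset.Icc p q ∩ Finset.Icc p' q' = Finset.Icc (max p p') (min q q') := by
      ext x
      simp only [Finset.mem_inter, Finset.mem_Icc]
      omega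
    rw [hIcc, Nat.card_Icc]
    rcases le_total p p' with h | h
    · have hb := overlap_bound hτ h1 h2 h hne
      have : max p p' = p' := by omega
      rw [this]
      exact hb
    · have hb := overlap_bound hτ h2 h1 h (fun hh => hne hh.symm)
      have h1' : max p p' = p := by omega
      have h2' : min q q' = min q' q := by omega
      rw [h1', h2']
      exact hb
  · classical
    set g := (τ + 2) / 3 with hgdef
    have hg1 : 1 ≤ g := by omega
    set F := ((Finset.Icc 1 n) ×ˢ (Finset.Icc 1 n)).filter
      (fun x : ℕ × ℕ => IsTauRun T n τ x.1 x.2) with hFdef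
    have hSF : {x : ℕ × ℕ | IsTauRun T n τ x.1 x.2} = ↑F := by
      ext x
      simp only [Set.mem_setOf_eq, hFdef, Finset.coe_filter, Finset.mem_product,
        Finset.mem_Icc, Set.mem_setOf_eq]
      constructor
      · intro h
        exact ⟨⟨⟨h.1, h.2.1.trans h.2.2.1⟩, ⟨h.1.trans h.2.1, h.2.2.1⟩⟩, h⟩
      · exact fun h => h.2
    rw [hSF, Set.ncard_coe_finset]
    have hcard : F.card ≤ (n - τ) / g + 1 := by
      have hmaps : ∀ x ∈ F, (fun x : ℕ × ℕ => (x.1 - 1) / g) x ∈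
          Finset.range ((n - τ) / g + 1) := by
        intro x hx
        simp only [hFdef, Finset.mem_filter] at hx
        obtain ⟨-, hp1, hpq, hqn, hlen, -⟩ := hx
        simp only [Finset.mem_range]
        have hle : x.1 - 1 ≤ n - τ := by omega
        have := Nat.div_le_div_right (c := g) hle
        omega
      have hinj : Set.InjOn (fun x : ℕ × ℕ => (x.1 - 1) / g) ↑F := by
        intro x hx y hy hxy
        simp only [Finset.coe_filter, Set.mem_setOf_eq, hFdef, Finset.mem_product] at hx hy
        by_contra hne
        have hne' : (x.1, x.2) ≠ (y.1, y.2) := by simpa using hne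
        have hne'' : (y.1, y.2) ≠ (x.1, x.2) := fun h => hne' h.symm
        have hkey : ∀ u v : ℕ, 1 ≤ u → u ≤ v → τ ≤ 3 * (v - u) →
            (u - 1) / g = (v - 1) / g → False := by
          intro u v hu huv hgap heq
          have hvg : u - 1 + g ≤ v - 1 := by omega
          have := Nat.div_le_div_right (c := g) hvg
          rw [Nat.add_div_right _ (by omega)] at this
          omega
        rcases le_total x.1 y.1 with h | h
        · exact hkey x.1 y.1 hx.2.1 h (run_gap hτ hx.2 hy.2 h hne') hxy
        · exact hkey y.1 x.1 hy.2.1 h (run_gap hτ hy.2 hx.2 h hne'') hxy.symm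
      have := Finset.card_le_card_of_injOn _ hmaps hinj
      simpa using this
    have hτ3g : τ ≤ 3 * g := by omega
    have hDg : (n - τ) / g * g ≤ n - τ := Nat.div_mul_le_self _ _
    calc τ * F.card ≤ τ * ((n - τ) / g + 1) := Nat.mul_le_mul_left τ hcard
      _ = τ * ((n - τ) / g) + τ := by ring
      _ ≤ 3 * g * ((n - τ) / g) + τ := by
          exact Nat.add_le_add_right (Nat.mul_le_mul_right _ hτ3g) τ
      _ = 3 * ((n - τ) / g * g) + τ := by ring
      _ ≤ 3 * (n - τ) + τ := Nat.add_le_add_right (Nat.mul_le_mul_left 3 hDg) τ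
      _ ≤ 3 * n := by omega
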